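/- arXiv:0711.3533 — 5 statements merged into one kernel-verified Lean document; each statement's English description precedes it below -/
import Mathlib

section
/- Let ψ : E^g → E^r be a surjective morphism of abelian varieties of rank r given by an integer matrix. Then there exists a Gauss-reduced morphism φ : E^g → E^r (possibly after permuting coordinates) such that ker ψ ⊆ ker φ + (E^r_{Tor} × {0}^{g−r}), where E^r_{Tor} is the torsion subgroup of E^r. -/
/-!
Choose `r` columns `c` of `ψ` whose maximal minor `d = det ψ_c` has the largest absolute value;
it is nonzero because `ψ` has rank `r`. Then `φ = sign(d) · adj(ψ_c) · ψ` satisfies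
`φ_c = |d| · I_r`, and by Cramer's rule every entry of `φ` is `±` another maximal minor of `ψ`,
hence at most `|d|` in absolute value. As `φ` factors through `ψ`, already `ker ψ ⊆ ker φ`.
-/

namespace Matrix

variable {m n : Type*}

theorem rank_le_rank_map_of_isFractionRing [Fintype n] {R K : Type*} [CommRing R] [IsDomain R]
    [Field K] [Algebra R K] [IsFractionRing R K] (A : Matrix m n R) :
    A.rank ≤ (A.map (algebraMap R K)).rank := by
  obtain ⟨v, hv⟩ := exists_linearIndependent_of_le_finrank
    (R := R) (M := LinearMap.range A.mulVecLin) le_rfl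
  let L : (m → R) →ₗ[R] (m → K) := (Algebra.linearMap R K).compLeft m
  have hL : Function.Injective L := fun x y h => funext fun i =>
    IsFractionRing.injective R K (congrFun h i)
  have hLv : LinearIndependent K (fun k => L (v k)) :=
    (LinearIndependent.iff_fractionRing R K).mp <|
      (hv.map' _ (Submodule.ker_subtype _)).map' L (LinearMap.ker_eq_bot.mpr hL)
  have hLv_mem : ∀ k, L (v k) ∈ LinearMap.range (A.map (algebraMap R K)).mulVecLin := by
    intro k
    obtain ⟨x, hx⟩ := (v k).2
    refine ⟨fun j => algebraMap R K (x j), ?_⟩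
    ext i
    simp [← hx, L, mulVec, dotProduct]
  calc A.rank = Fintype.card (Fin A.rank) := (Fintype.card_fin _).symm
    _ = Module.finrank K (Submodule.span K (Set.range fun k => L (v k))) :=
        (finrank_span_eq_card hLv).symm
    _ ≤ _ := Submodule.finrank_mono (Submodule.span_le.mpr (Set.range_subset_iff.mpr hLv_mem))

theorem exists_det_submatrix_ne_zero_of_rank_eq_card_of_field [Fintype m] [DecidableEq m]
    [Fintype n] {K : Type*} [Field K] (A : Matrix m n K) (hA : A.rank = Fintype.card m) :
    ∃ c : m → n, (A.submatrix id c).det ≠ 0 := by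
  obtain ⟨κ, a, ha, hspan, hind⟩ := exists_linearIndependent' K A.col
  have : Fintype κ := have := Finite.of_injective a ha; Fintype.ofFinite κ
  have hcard : Fintype.card m = Fintype.card κ := by
    rw [← hA, rank_eq_finrank_span_cols, ← hspan, finrank_span_eq_card hind]
  let e := Fintype.equivOfCardEq hcard
  have hcols : LinearIndependent K (A.submatrix id (a ∘ e)).col := hind.comp e e.injective
  exact ⟨a ∘ e, ((isUnit_iff_isUnit_det _).mp (linearIndependent_cols_iff_isUnit.mp hcols)).ne_zero⟩

theorem exists_det_submatrix_ne_zero_of_rank_eq_card [Fintype m] [DecidableEq m] [Fintype n]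
    {R : Type*} [CommRing R] [IsDomain R] (A : Matrix m n R) (hA : A.rank = Fintype.card m) :
    ∃ c : m → n, (A.submatrix id c).det ≠ 0 := by
  let K := FractionRing R
  have hAK : (A.map (algebraMap R K)).rank = Fintype.card m :=
    le_antisymm (rank_le_card_height _) (hA ▸ rank_le_rank_map_of_isFractionRing A)
  obtain ⟨c, hc⟩ := exists_det_submatrix_ne_zero_of_rank_eq_card_of_field _ hAK
  refine ⟨c, fun h => hc ?_⟩
  rw [submatrix_map, ← RingHom.mapMatrix_apply, ← RingHom.map_det, h, map_zero]

theorem adjugate_submatrix_mul_apply [Fintype m] [DecidableEq m] {R : Type*} [CommRing R]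
    (A : Matrix m n R) (c : m → n) (i : m) (j : n) :
    ((A.submatrix id c).adjugate * A) i j = (A.submatrix id (Function.update c i j)).det := by
  have : ((A.submatrix id c).adjugate * A) i j = ((A.submatrix id c).adjugate *ᵥ A.col j) i := by
    simp [mul_apply, mulVec, dotProduct]
  rw [this, ← cramer_eq_adjugate_mulVec, cramer_apply]
  congr 1
  ext k l
  by_cases h : l = i
  · subst h; simp
  · simp [Function.update_of_ne h, updateCol_ne h]

theorem sum_mul_apply_smul {l R E : Type*} [Fintype m] [Fintype n] [Semiring R]
    [AddCommMonoid E] [Module R E] (B : Matrix l m R) (A : Matrix m n R) (x : n → E) (i : l) :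
    ∑ j, (B * A) i j • x j = ∑ k, B i k • ∑ j, A k j • x j := by
  simp_rw [mul_apply, Finset.sum_smul, Finset.smul_sum, mul_smul]
  exact Finset.sum_comm

/-- Since `a` is an entry of `φ` bounding all others, it is the height `H(φ)`. -/
structure IsGaussReduced [DecidableEq m] (φ : Matrix m n ℤ) (c : m → n) (a : ℤ) : Prop where
  pos : 0 < a
  submatrix_eq : φ.submatrix id c = a • 1
  abs_le : ∀ i j, |φ i j| ≤ a

namespace IsGaussReduced

variable [DecidableEq m] {φ : Matrix m n ℤ} {c : m → n} {a : ℤ}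

theorem apply_eq (hφ : IsGaussReduced φ c a) (i j : m) :
    φ i (c j) = if i = j then a else 0 := by
  simpa [one_apply] using congr_fun₂ hφ.submatrix_eq i j

theorem injective (hφ : IsGaussReduced φ c a) : Function.Injective c := by
  intro k l hkl
  by_contra hne
  have hkk := hφ.apply_eq k k
  rw [hkl, hφ.apply_eq, if_neg hne, if_pos rfl] at hkk
  exact hφ.pos.ne hkk

end IsGaussReduced

theorem exists_isGaussReduced_mul [Fintype m] [DecidableEq m] [Fintype n] (ψ : Matrix m n ℤ)
    (hψ : ψ.rank = Fintype.card m) :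
    ∃ (B : Matrix m m ℤ) (c : m → n) (a : ℤ), IsGaussReduced (B * ψ) c a := by
  obtain ⟨c₀, hc₀⟩ := exists_det_submatrix_ne_zero_of_rank_eq_card ψ hψ
  have : Nonempty (m → n) := ⟨c₀⟩
  obtain ⟨c, hc⟩ := Finite.exists_max fun c : m → n => |(ψ.submatrix id c).det|
  set d := (ψ.submatrix id c).det
  have hd : d ≠ 0 := abs_pos.mp ((abs_pos.mpr hc₀).trans_le (hc c₀))
  refine ⟨d.sign • (ψ.submatrix id c).adjugate, c, |d|, abs_pos.mpr hd, ?_, fun i j => ?_⟩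
  · rw [Matrix.smul_mul, submatrix_smul, Pi.smul_apply, Pi.smul_apply,
      submatrix_mul _ _ id id c Function.bijective_id, submatrix_id_id, adjugate_mul, smul_smul,
      Int.sign_mul_self_eq_abs]
  · rw [Matrix.smul_mul, smul_apply, adjugate_submatrix_mul_apply, smul_eq_mul, abs_mul,
      Int.abs_sign_of_ne_zero hd, one_mul]
    exact hc _

end Matrix

theorem stmt_5_general {E : Type*} [AddCommGroup E] {g r : ℕ} (hrg : r ≤ g)
    (ψ : Matrix (Fin r) (Fin g) ℤ)
    (hrank : ψ.rank = r) :
    ∃ (a : ℤ) (φ : Matrix (Fin r) (Fin g) ℤ) (σ : Equiv.Perm (Fin g)),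
      0 < a ∧
      (∀ i j : Fin r, φ i (σ (Fin.castLE hrg j)) = if i = j then a else 0) ∧
      (∀ i j, |φ i j| ≤ a) ∧
      ∀ x : Fin g → E, (∀ i, ∑ j, ψ i j • x j = 0) →
        ∃ b t : Fin g → E, x = b + t ∧
          (∀ i, ∑ j, φ i j • b j = 0) ∧
          (∀ j, IsOfFinAddOrder (t j)) ∧
          (∀ j : Fin g, (∀ j' : Fin r, σ (Fin.castLE hrg j') ≠ j) → t j = 0) := by
  obtain ⟨B, c, a, hφ⟩ := Matrix.exists_isGaussReduced_mul ψ (by rw [hrank, Fintype.card_fin])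
  obtain ⟨σ, hσ⟩ := Equiv.Perm.exists_extending_pair _ _ (Fin.castLE_injective hrg) hφ.injective
  refine ⟨a, B * ψ, σ, hφ.pos, fun i j => hσ j ▸ hφ.apply_eq i j, hφ.abs_le, fun x hx => ?_⟩
  refine ⟨x, 0, (add_zero x).symm, fun i => ?_, fun _ => IsOfFinAddOrder.zero, fun _ _ => rfl⟩
  simp [Matrix.sum_mul_apply_smul, hx]

/-- let `E` be the group of algebraic points of an elliptic curve without
CM (in particular a divisible group), and `ψ : E^g → E^r` a surjective morphism given by
an integer matrix of rank `r`.  Then there is a Gauss-reduced morphism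
`φ : E^g → E^r` — i.e. after a permutation `σ` of the coordinates, `φ` has an `r × r`
submatrix `a·I_r` with `a = H(φ) > 0` bounding all entries — such that
`ker ψ ⊆ ker φ + (E^r_Tor × {0}^{g-r})` (the torsion part sitting in the `r` permuted
coordinates). -/
theorem stmt_5 {E : Type*} [AddCommGroup E] {g r : ℕ} (hrg : r ≤ g)
    (hdiv : ∀ (n : ℤ), n ≠ 0 → ∀ e : E, ∃ e' : E, n • e' = e)
    (ψ : Matrix (Fin r) (Fin g) ℤ)
    (hsurj : Function.Surjective fun (x : Fin g → E) (i : Fin r) => ∑ j, ψ i j • x j)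
    (hrank : ψ.rank = r) :
    ∃ (a : ℤ) (φ : Matrix (Fin r) (Fin g) ℤ) (σ : Equiv.Perm (Fin g)),
      0 < a ∧
      (∀ i j : Fin r, φ i (σ (Fin.castLE hrg j)) = if i = j then a else 0) ∧
      (∀ i j, |φ i j| ≤ a) ∧
      ∀ x : Fin g → E, (∀ i, ∑ j, ψ i j • x j = 0) →
        ∃ b t : Fin g → E, x = b + t ∧
          (∀ i, ∑ j, φ i j • b j = 0) ∧
          (∀ j, IsOfFinAddOrder (t j)) ∧
          (∀ j : Fin g, (∀ j' : Fin r, σ (Fin.castLE hrg j') ≠ j) → t j = 0) :=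
  stmt_5_general hrg ψ hrank
end

section
/- Let V ⊂ E^g be an irreducible subvariety with finite stabilizer, φ = (aI_r|L) Gauss-reduced of rank r. Define F(x) = (x_1,...,x_r, a·x_{r+1},...,a·x_g) and L(x) = (x_1 + L_1(x̄),...,x_r + L_r(x̄), x_{r+1},...,x_g) where x̄ = (x_{r+1},...,x_g), and set W = L(F^{-1}(V)). Then the stabilizer of W equals L(F^{-1}(Stab V)) and has cardinality a^{2(g−r)} · |Stab V|. -/
/-- The stabilizer of a subset `X ⊆ E^ι`: the points `y` with `y + X ⊆ X`. -/
def stabSet {E ι : Type*} [AddCommGroup E] (X : Set (ι → E)) : Set (ι → E) :=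
  {y | ∀ v ∈ X, y + v ∈ X}

/-- let `E` be the group of algebraic points of an elliptic curve (so the
`a`-torsion has `a²` elements and `E` is divisible), `V ⊆ E^g` an irreducible
subvariety with finite stabilizer, and `φ = (aI_r | L)` Gauss-reduced, with `E^g`
indexed by `Fin r ⊕ Fin k` (`g = r + k`).  With
`F(x) = (x₁,…,x_r, a·x_{r+1},…,a·x_g)` and
`L(x) = (x₁ + L₁(x̄),…,x_r + L_r(x̄), x_{r+1},…,x_g)`, set `W = L(F⁻¹(V))`.  Then
`Stab W = L(F⁻¹(Stab V))` and `|Stab W| = a^{2(g-r)} · |Stab V|`. -/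
theorem stmt_9 {E : Type*} [AddCommGroup E] {r k : ℕ}
    (htor : ∀ a : ℤ, a ≠ 0 → Nat.card {e : E // a • e = 0} = a.natAbs ^ 2)
    (hdiv : ∀ (n : ℤ), n ≠ 0 → ∀ e : E, ∃ e' : E, n • e' = e)
    (a : ℤ) (ha : 0 < a)
    (Lm : Matrix (Fin r) (Fin k) ℤ)
    (F Lmap : (Fin r ⊕ Fin k → E) → (Fin r ⊕ Fin k → E))
    (hF : ∀ x, F x = Sum.elim (fun i => x (Sum.inl i)) (fun j => a • x (Sum.inr j)))
    (hLmap : ∀ x, Lmap x =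
      Sum.elim (fun i => x (Sum.inl i) + ∑ j, Lm i j • x (Sum.inr j))
        (fun j => x (Sum.inr j)))
    (V : Set (Fin r ⊕ Fin k → E)) (hV : V.Nonempty)
    (hstab : (stabSet V).Finite) :
    stabSet (Lmap '' (F ⁻¹' V)) = Lmap '' (F ⁻¹' stabSet V) ∧
      (stabSet (Lmap '' (F ⁻¹' V))).ncard = a.natAbs ^ (2 * k) * (stabSet V).ncard := by
  have ha0 : a ≠ 0 := ha.ne'
  -- F is additive
  have hFadd : ∀ x y, F (x + y) = F x + F y := by
    intro x y
    funext i
    cases i with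
    | inl i => simp [hF]
    | inr j => simp [hF, smul_add]
  -- Lmap is additive
  have hLadd : ∀ x y, Lmap (x + y) = Lmap x + Lmap y := by
    intro x y
    funext i
    cases i with
    | inl i =>
      simp only [hLmap, Sum.elim_inl, Pi.add_apply, smul_add, Finset.sum_add_distrib]
      abel
    | inr j => simp [hLmap]
  -- Lmap is bijective
  have hLbij : Function.Bijective Lmap := by
    refine Function.bijective_iff_has_inverse.mpr
      ⟨fun x => Sum.elim (fun i => x (Sum.inl i) - ∑ j, Lm i j • x (Sum.inr j))
        (fun j => x (Sum.inr j)), ?_, ?_⟩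
    · intro x
      funext i
      cases i with
      | inl i => simp [hLmap]
      | inr j => simp [hLmap]
    · intro x
      funext i
      cases i with
      | inl i => simp [hLmap]
      | inr j => simp [hLmap]
  -- F is surjective
  have hFsurj : Function.Surjective F := by
    intro w
    choose f hf using hdiv a ha0
    refine ⟨Sum.elim (fun i => w (Sum.inl i)) (fun j => f (w (Sum.inr j))), ?_⟩
    funext i
    cases i with
    | inl i => simp [hF]
    | inr j => simp [hF, hf]
  -- Step 1: stab of preimage
  have hstep1 : stabSet (F ⁻¹' V) = F ⁻¹' stabSet V := by
    ext y
    constructor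
    · intro hy w hw
      obtain ⟨v, hv⟩ := hFsurj w
      have := hy v (by simpa [Set.mem_preimage, hv] using hw)
      simpa [Set.mem_preimage, hFadd, hv] using this
    · intro hy v hv
      simp only [Set.mem_preimage, hFadd]
      exact hy (F v) hv
  -- Step 2: stab of image under bijective additive map
  have hstep2 : ∀ S : Set (Fin r ⊕ Fin k → E),
      stabSet (Lmap '' S) = Lmap '' stabSet S := by
    intro S
    ext z
    constructor
    · intro hz
      obtain ⟨y, rfl⟩ := hLbij.2 z
      refine ⟨y, fun v hv => ?_, rfl⟩
      have := hz (Lmap v) ⟨v, hv, rfl⟩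
      rw [← hLadd] at this
      obtain ⟨s, hs, hse⟩ := this
      rwa [← hLbij.1 hse]
    · rintro ⟨y, hy, rfl⟩ w ⟨v, hv, rfl⟩
      exact ⟨y + v, hy v hv, (hLadd y v)⟩
  have hkey : stabSet (Lmap '' (F ⁻¹' V)) = Lmap '' (F ⁻¹' stabSet V) := by
    rw [hstep2, hstep1]
  refine ⟨hkey, ?_⟩
  rw [hkey, Set.ncard_image_of_injective _ hLbij.1]
  -- cardinality of the preimage
  set S : Set (Fin r ⊕ Fin k → E) := stabSet V with hS
  -- kernel of F
  have hker : Nat.card {x : Fin r ⊕ Fin k → E // F x = 0} = a.natAbs ^ (2 * k) := by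
    have e : {x : Fin r ⊕ Fin k → E // F x = 0} ≃ (Fin k → {e : E // a • e = 0}) := by
      refine ⟨fun x j => ⟨x.1 (Sum.inr j), ?_⟩,
        fun f => ⟨Sum.elim (fun _ => 0) (fun j => (f j).1), ?_⟩, ?_, ?_⟩
      · have := congrFun x.2 (Sum.inr j)
        simpa [hF] using this
      · funext i
        cases i with
        | inl i => simp [hF]
        | inr j => simpa [hF] using (f j).2
      · rintro ⟨x, hx⟩
        ext i
        cases i with
        | inl i =>
          have := congrFun hx (Sum.inl i)
          simpa [hF] using this.symm
        | inr j => rfl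
      · intro f
        rfl
    rw [Nat.card_congr e, Nat.card_pi]
    simp [htor a ha0, ← pow_mul, mul_comm k 2]
  -- choose sections
  choose sec hsec using hFsurj
  have efib : ↥(F ⁻¹' S) ≃ ↥S × {x : Fin r ⊕ Fin k → E // F x = 0} := by
    refine ⟨fun x => ⟨⟨F x.1, x.2⟩, ⟨x.1 - sec (F x.1), ?_⟩⟩,
      fun p => ⟨sec p.1.1 + p.2.1, ?_⟩, ?_, ?_⟩
    · have hx : x.1 - sec (F x.1) + sec (F x.1) = x.1 := by abel
      have h1 : F (x.1 - sec (F x.1)) + F (sec (F x.1)) = F x.1 := by rw [← hFadd, hx]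
      rw [hsec] at h1
      exact add_eq_right.mp h1
    · have : F (sec p.1.1 + p.2.1) = p.1.1 := by
        rw [hFadd, hsec, p.2.2, add_zero]
      simpa [Set.mem_preimage, this] using p.1.2
    · rintro ⟨x, hx⟩
      simp only [Subtype.mk.injEq]
      abel
    · rintro ⟨⟨s, hs⟩, ⟨t, ht⟩⟩
      have hFs : F (sec s + t) = s := by rw [hFadd, hsec, ht, add_zero]
      simp only [Prod.mk.injEq, Subtype.mk.injEq, hFs, true_and]
      abel
  have := Nat.card_congr efib
  rw [Nat.card_prod, hker] at this
  rw [← Nat.card_coe_set_eq, ← Nat.card_coe_set_eq, this, mul_comm]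
end

section
/- Let W = L(F^{-1}(V)) be the helping variety associated to a Gauss-reduced morphism φ = (aI_r|L), where F(x) = (x_1,...,x_r, ax_{r+1},...,ax_g) and L is the unipotent isomorphism adding L_i(x̄) to the i-th coordinate. Let Φ : E^g → E^g be defined by Φ(x) = (φ_1(x),...,φ_r(x), x_{r+1},...,x_g) where φ_i are the rows of φ. Then Φ(V) = [a]W. -/
/-- with `E^g` indexed by `Fin r ⊕ Fin k` (`g = r + k`), let
`φ = (aI_r | L)` be Gauss-reduced, `F(x) = (x₁,…,x_r, a·x_{r+1},…,a·x_g)`,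
`L(x) = (x₁ + L₁(x̄),…,x_r + L_r(x̄), x̄)` the unipotent isomorphism, and
`Φ(x) = (φ₁(x),…,φ_r(x), x̄)`.  For the helping variety `W = L(F⁻¹(V))` one has
`Φ(V) = [a]W`.  (`E` is divisible, being the points of an elliptic curve over `ℚ̄`.) -/
theorem stmt_11 {E : Type*} [AddCommGroup E] {r k : ℕ}
    (a : ℤ) (ha : 0 < a)
    (hdiv : ∀ e : E, ∃ e' : E, a • e' = e)
    (Lm : Matrix (Fin r) (Fin k) ℤ) (hL : ∀ i j, |Lm i j| ≤ a)
    (V : Set (Fin r ⊕ Fin k → E)) :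
    (fun (x : Fin r ⊕ Fin k → E) =>
        Sum.elim (fun i => a • x (Sum.inl i) + ∑ j, Lm i j • x (Sum.inr j))
          (fun j => x (Sum.inr j))) '' V =
      (fun (w : Fin r ⊕ Fin k → E) => a • w) ''
        ((fun (x : Fin r ⊕ Fin k → E) =>
            Sum.elim (fun i => x (Sum.inl i) + ∑ j, Lm i j • x (Sum.inr j))
              (fun j => x (Sum.inr j))) ''
          ((fun (x : Fin r ⊕ Fin k → E) =>
              Sum.elim (fun i => x (Sum.inl i)) (fun j => a • x (Sum.inr j))) ⁻¹' V)) := by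
  ext y
  constructor
  · rintro ⟨v, hv, rfl⟩
    choose c hc using fun j => hdiv (v (Sum.inr j))
    refine ⟨Sum.elim (fun i => v (Sum.inl i) + ∑ j, Lm i j • c j) (fun j => c j),
      ⟨Sum.elim (fun i => v (Sum.inl i)) c, ?_, ?_⟩, ?_⟩
    · show Sum.elim (fun i => (Sum.elim (fun i => v (Sum.inl i)) c) (Sum.inl i))
        (fun j => a • (Sum.elim (fun i => v (Sum.inl i)) c) (Sum.inr j)) ∈ V
      convert hv using 1
      funext x
      cases x with
      | inl i => simp
      | inr j => simp [hc]
    · funext x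
      cases x with
      | inl i => simp
      | inr j => simp
    · funext x
      cases x with
      | inl i =>
        simp only [Pi.smul_apply, Sum.elim_inl, smul_add, Finset.smul_sum]
        congr 1
        refine Finset.sum_congr rfl fun j _ => ?_
        rw [smul_comm, hc]
      | inr j => simp [hc]
  · rintro ⟨w, ⟨x, hx, rfl⟩, rfl⟩
    refine ⟨Sum.elim (fun i => x (Sum.inl i)) (fun j => a • x (Sum.inr j)), hx, ?_⟩
    funext z
    cases z with
    | inl i =>
      simp only [Sum.elim_inl, Pi.smul_apply, smul_add, Finset.smul_sum, Sum.elim_inr]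
      congr 1
      exact Finset.sum_congr rfl fun j _ => (smul_comm _ _ _)
    | inr j => simp
end

section
/- Let X = X_1 × E^{d_2} ⊆ E^{g−d_2} × E^{d_2} = E^g, F ⊆ E^g a subset, r ≥ d_2 an integer, and let F' be the projection of F to E^{g−d_2}. Then S_r(X, F) ⊆ S_{r−d_2}(X_1, F') × E^{d_2}; that is, if (x_1, x_2) ∈ S_r(X, F) then x_1 ∈ S_{r−d_2}(X_1, F'). -/
/-- Membership in `S_r(X, F) = X ∩ ⋃_{cod B ≥ r} (B + F)`: `x ∈ X` and there is an
algebraic subgroup of codimension at least `r` — the kernel of a morphism given by an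
integer matrix `φ` of rank at least `r` — and `f ∈ F` with `φ(x - f) = 0`. -/
def SrMem {E : Type*} [AddCommGroup E] {ι : Type} [Fintype ι] [DecidableEq ι]
    (r : ℕ) (X F : Set (ι → E)) (x : ι → E) : Prop :=
  x ∈ X ∧ ∃ (n : ℕ) (φ : Matrix (Fin n) ι ℤ), r ≤ φ.rank ∧
    ∃ f ∈ F, ∀ i, ∑ j, φ i j • (x j - f j) = 0


open Matrix Module Submodule

/-- Componentwise `ℤ → ℚ` cast as a `ℤ`-linear map. -/
def castLM (p : Type*) : (p → ℤ) →ₗ[ℤ] (p → ℚ) where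
  toFun v i := (v i : ℚ)
  map_add' u v := by funext i; push_cast; simp
  map_smul' z v := by funext i; simp [zsmul_eq_mul]

lemma castLM_injective (p : Type*) : Function.Injective (castLM p) := by
  intro u v h
  funext i
  have h2 : ((u i : ℚ)) = ((v i : ℚ)) := congrFun h i
  exact_mod_cast h2

lemma castLM_ker (p : Type*) : LinearMap.ker (castLM p) = ⊥ :=
  LinearMap.ker_eq_bot.mpr (castLM_injective p)

lemma indepQ {p : Type*} {k : ℕ} {v : Fin k → (p → ℤ)} (hv : LinearIndependent ℤ v) :
    LinearIndependent ℚ (fun i => castLM p (v i)) := by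
  have h1 : LinearIndependent ℤ (fun i => castLM p (v i)) := hv.map' _ (castLM_ker p)
  exact (LinearIndependent.iff_fractionRing ℤ ℚ).mp h1

lemma finrank_span_cast {p : Type*} {k : ℕ} {v : Fin k → (p → ℤ)}
    (hv : LinearIndependent ℤ v) :
    finrank ℚ (span ℚ (Set.range (fun i => castLM p (v i)))) = k := by
  rw [finrank_span_eq_card (indepQ hv), Fintype.card_fin]

lemma spanQ_spanZ {p : Type*} (s : Set (p → ℤ)) :
    span ℚ (castLM p '' ((span ℤ s : Submodule ℤ (p → ℤ)) : Set (p → ℤ)))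
      = span ℚ (castLM p '' s) := by
  rw [← Submodule.map_coe, Submodule.map_span, span_span_of_tower]

lemma range_map_cast_mulVecLin {q p : Type} [Fintype q] [Fintype p] (A : Matrix q p ℤ) :
    LinearMap.range (A.map (fun z : ℤ => (z : ℚ))).mulVecLin
      = span ℚ (castLM q '' ((LinearMap.range A.mulVecLin : Submodule ℤ (q → ℤ)) : Set (q → ℤ))) := by
  rw [Matrix.range_mulVecLin, Matrix.range_mulVecLin, spanQ_spanZ]
  rw [← Set.range_comp]
  rfl

lemma rank_map_cast {q p : Type} [Fintype q] [Fintype p] (A : Matrix q p ℤ) :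
    (A.map (fun z : ℤ => (z : ℚ))).rank = A.rank := by
  obtain ⟨k, b⟩ := Submodule.basisOfPid (Pi.basisFun ℤ q) (LinearMap.range A.mulVecLin)
  have hindep : LinearIndependent ℤ (fun i => ((b i : q → ℤ))) := by
    have := b.linearIndependent.map' (LinearMap.range A.mulVecLin).subtype
      (Submodule.ker_subtype _)
    exact this
  have hN : ((LinearMap.range A.mulVecLin : Submodule ℤ (q → ℤ)) : Set (q → ℤ))
      = ((span ℤ (Set.range fun i => ((b i : q → ℤ))) : Submodule ℤ (q → ℤ)) : Set (q → ℤ)) := by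
    conv_lhs => rw [← Submodule.map_subtype_top (LinearMap.range A.mulVecLin), ← b.span_eq]
    rw [Submodule.map_span]
    rw [← Set.range_comp]
    rfl
  have key : LinearMap.range (A.map (fun z : ℤ => (z : ℚ))).mulVecLin
      = span ℚ (Set.range (fun i => castLM q ((b i : q → ℤ)))) := by
    rw [range_map_cast_mulVecLin, hN, spanQ_spanZ, ← Set.range_comp]
    rfl
  rw [Matrix.rank, key, finrank_span_cast hindep, Matrix.rank, finrank_eq_card_basis b,
    Fintype.card_fin]


set_option maxHeartbeats 4000000

/-- let `X = X₁ × E^{d₂} ⊆ E^{g₁} × E^{d₂} = E^g` (coordinates indexed by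
`Fin g₁ ⊕ Fin d₂`), `F ⊆ E^g` a subset and `r ≥ d₂`.  If `(x₁, x₂) ∈ S_r(X, F)` then
`x₁ ∈ S_{r - d₂}(X₁, F')`, where `F'` is the projection of `F` to `E^{g₁}`; i.e. the
projection to the first `g₁` coordinates maps `S_r(X, F)` into
`S_{r - d₂}(X₁, F') × E^{d₂}`. -/
theorem stmt_14 {E : Type*} [AddCommGroup E] {g1 d2 : ℕ}
    (X1 : Set (Fin g1 → E)) (F : Set (Fin g1 ⊕ Fin d2 → E))
    (r : ℕ) (hr : d2 ≤ r)
    (z : Fin g1 ⊕ Fin d2 → E)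
    (hz : SrMem r {w : Fin g1 ⊕ Fin d2 → E | (fun i => w (Sum.inl i)) ∈ X1} F z) :
    SrMem (r - d2) X1 ((fun f : Fin g1 ⊕ Fin d2 → E => fun i => f (Sum.inl i)) '' F)
      (fun i => z (Sum.inl i)) := by
  classical
  obtain ⟨hX, n, φ, hrank, f, hf, hker⟩ := hz
  set α : Matrix (Fin n) (Fin g1) ℤ := Matrix.of (fun k j => φ k (Sum.inl j)) with hα
  set β : Matrix (Fin n) (Fin d2) ℤ := Matrix.of (fun k j => φ k (Sum.inr j)) with hβ
  obtain ⟨m, bK⟩ := Submodule.basisOfPid (Pi.basisFun ℤ (Fin n)) (LinearMap.ker β.vecMulLinear)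
  set u : Fin m → (Fin n → ℤ) := fun i => ((bK i : Fin n → ℤ)) with hu
  have hu_indep : LinearIndependent ℤ u :=
    bK.linearIndependent.map' _ (Submodule.ker_subtype _)
  have hu_ker : ∀ i, (u i) ᵥ* β = 0 := fun i => LinearMap.mem_ker.mp (bK i).2
  set U : Matrix (Fin m) (Fin n) ℤ := Matrix.of u with hU
  refine ⟨hX, m, U * α, ?_, fun i => f (Sum.inl i), ⟨f, hf, rfl⟩, ?_⟩
  · -- rank bound
    have hQ : r ≤ (φ.map (fun z : ℤ => (z : ℚ))).rank := by
      rw [rank_map_cast]; exact hrank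
    rw [← rank_map_cast (U * α)]
    set U' := U.map (fun z : ℤ => (z : ℚ)) with hU'
    set α' := α.map (fun z : ℤ => (z : ℚ)) with hα'
    set β' := β.map (fun z : ℤ => (z : ℚ)) with hβ'
    set φ' := φ.map (fun z : ℤ => (z : ℚ)) with hφ'
    have hmul : (U * α).map (fun z : ℤ => (z : ℚ)) = U' * α' := by
      ext i j
      simp [hU', hα', Matrix.map_apply, Matrix.mul_apply]
    rw [hmul, ← Matrix.rank_transpose (U' * α'), Matrix.transpose_mul]
    rw [Matrix.rank, Matrix.mulVecLin_mul, LinearMap.range_comp]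
    set fQ := α'ᵀ.mulVecLin with hfQ
    set W := LinearMap.range U'ᵀ.mulVecLin with hWdef
    have hW : W = Submodule.span ℚ (Set.range fun i => castLM (Fin n) (u i)) := by
      rw [hWdef, Matrix.range_mulVecLin, Matrix.col_transpose]
      have : (U' : Fin m → Fin n → ℚ) = fun i => castLM (Fin n) (u i) := by
        funext i k; rfl
      rw [this]; rfl
    have hWrank : Module.finrank ℚ W = m := by rw [hW, finrank_span_cast hu_indep]
    -- ℤ-side : n ≤ m + d2
    have hm : n ≤ m + d2 := by
      have hg := LinearMap.rank_range_add_rank_ker β.vecMulLinear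
      rw [rank_fin_fun] at hg
      have hK : Module.rank ℤ (LinearMap.ker β.vecMulLinear) = m := by
        rw [rank_eq_card_basis bK, Fintype.card_fin]
      have hrange : Module.rank ℤ (LinearMap.range β.vecMulLinear) ≤ d2 := by
        have h := Submodule.rank_le (LinearMap.range β.vecMulLinear)
        rwa [rank_fin_fun] at h
      have hcard : (n : Cardinal) ≤ ((m + d2 : ℕ) : Cardinal) := by
        push_cast
        rw [← hg, hK]
        exact (add_le_add_left hrange _).trans_eq (add_comm _ _)
      exact_mod_cast hcard
    -- W is contained in the left kernel of β
    have hWβ : W ≤ LinearMap.ker β'ᵀ.mulVecLin := by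
      rw [hW, Submodule.span_le]
      rintro x ⟨i, rfl⟩
      rw [SetLike.mem_coe, LinearMap.mem_ker]
      funext jr
      have h1 : (∑ k, u i k * β k jr : ℤ) = 0 := by
        simpa [Matrix.vecMul, dotProduct] using congrFun (hu_ker i) jr
      have h2 : ((∑ k, u i k * β k jr : ℤ) : ℚ) = 0 := by rw [h1]; simp
      push_cast at h2
      simpa [Matrix.mulVecLin, Matrix.mulVec, Matrix.vecMul, dotProduct, castLM, hβ',
        Matrix.map_apply, mul_comm] using h2
    -- the intersection is inside the left kernel of φ
    have hsub : W ⊓ LinearMap.ker fQ ≤ LinearMap.ker φ'ᵀ.mulVecLin := by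
      intro x hx
      rw [Submodule.mem_inf] at hx
      obtain ⟨hxW, hxf⟩ := hx
      have hxβ : β'ᵀ.mulVecLin x = 0 := hWβ hxW
      have hxα : fQ x = 0 := hxf
      rw [LinearMap.mem_ker]
      funext j
      cases j with
      | inl j =>
        have h := congrFun hxα j
        simpa [hfQ, Matrix.mulVecLin, Matrix.mulVec, Matrix.vecMul, dotProduct, hφ', hα', hα,
          Matrix.map_apply] using h
      | inr j =>
        have h := congrFun hxβ j
        simpa [Matrix.mulVecLin, Matrix.mulVec, Matrix.vecMul, dotProduct, hφ', hβ', hβ,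
          Matrix.map_apply] using h
    have hc : Module.finrank ℚ ↥(W ⊓ LinearMap.ker fQ)
        ≤ Module.finrank ℚ (LinearMap.ker φ'ᵀ.mulVecLin) := Submodule.finrank_mono hsub
    -- rank-nullity for φ'ᵀ
    have hφker : Module.finrank ℚ (LinearMap.ker φ'ᵀ.mulVecLin) + φ'.rank = n := by
      have h3 := LinearMap.finrank_range_add_finrank_ker φ'ᵀ.mulVecLin
      rw [Module.finrank_pi, Fintype.card_fin] at h3
      have h4 : Module.finrank ℚ (LinearMap.range φ'ᵀ.mulVecLin) = φ'.rank := by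
        rw [← Matrix.rank]
        exact Matrix.rank_transpose φ'
      omega
    -- rank-nullity for the restriction
    have hsplit : Module.finrank ℚ (Submodule.map fQ W)
        + Module.finrank ℚ ↥(W ⊓ LinearMap.ker fQ) = m := by
      have h1 := LinearMap.finrank_range_add_finrank_ker (fQ.domRestrict W)
      rw [LinearMap.range_domRestrict, LinearMap.ker_domRestrict, hWrank] at h1
      have h2 : Module.finrank ℚ ↥((LinearMap.ker fQ).comap W.subtype)
          = Module.finrank ℚ ↥(W ⊓ LinearMap.ker fQ) := by
        rw [← Submodule.map_comap_subtype]
        exact (Submodule.equivMapOfInjective W.subtype (Submodule.injective_subtype W)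
          _).finrank_eq
      omega
    omega
  · -- the linear relation
    intro i
    have hUβ : ∀ jr : Fin d2, (∑ k, u i k * β k jr) = 0 := by
      intro jr
      simpa [Matrix.vecMul, dotProduct] using congrFun (hu_ker i) jr
    have hsplit : ∀ k : Fin n, ∑ j : Fin g1, α k j • (z (Sum.inl j) - f (Sum.inl j))
        = - ∑ jr : Fin d2, β k jr • (z (Sum.inr jr) - f (Sum.inr jr)) := by
      intro k
      have h := hker k
      rw [Fintype.sum_sum_type] at h
      exact eq_neg_of_add_eq_zero_left h
    calc ∑ j, (U * α) i j • (z (Sum.inl j) - f (Sum.inl j))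
        = ∑ j, ∑ k, u i k • (α k j • (z (Sum.inl j) - f (Sum.inl j))) := by
          simp only [Matrix.mul_apply, Finset.sum_smul, mul_smul]
          rfl
      _ = ∑ k, u i k • ∑ j, α k j • (z (Sum.inl j) - f (Sum.inl j)) := by
          rw [Finset.sum_comm]; simp [Finset.smul_sum]
      _ = ∑ k, u i k • (- ∑ jr, β k jr • (z (Sum.inr jr) - f (Sum.inr jr))) := by
          simp only [hsplit]
      _ = - ∑ k, ∑ jr, (u i k * β k jr) • (z (Sum.inr jr) - f (Sum.inr jr)) := by
          simp [smul_neg, Finset.smul_sum, mul_smul, Finset.sum_neg_distrib]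
      _ = - ∑ jr, (∑ k, u i k * β k jr) • (z (Sum.inr jr) - f (Sum.inr jr)) := by
          rw [Finset.sum_comm]
          simp [Finset.sum_smul]
      _ = 0 := by simp [hUβ]
end

section
/- For any subvariety V of E^g, any ε ≥ 0, any positive integer r, and any subgroup Γ of E^g of finite rank with division group Γ_0 ⊆ E, the map x ↦ (x, γ) defines an injection of S_r(V, Γ_ε) into S_r(V × γ, O_ε), where γ = (γ_1,...,γ_s) is a maximal free set of Γ_0. -/
/-- The division group `Γ₀ ⊆ E` of the coordinates group of `Γ ⊆ E^g`:
`{y ∈ E : N·y ∈ π(Γ)}` for some nonzero integer `N` and coordinate projection `π`. -/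
def divGroup {E : Type*} [AddCommGroup E] {g : ℕ} (Γ : AddSubgroup (Fin g → E)) :
    Set E :=
  {y | ∃ N : ℤ, N ≠ 0 ∧ ∃ x ∈ Γ, ∃ kk : Fin g, N • y = x kk}

open Matrix

theorem Matrix.rank_le_rank_fromCols {m n₁ n₂ R : Type*} [Fintype n₁] [Fintype n₂]
    [CommSemiring R] [StrongRankCondition R] (A₁ : Matrix m n₁ R) (A₂ : Matrix m n₂ R) :
    A₁.rank ≤ (fromCols A₁ A₂).rank :=
  rank_submatrix_le (fromCols A₁ A₂) id Sum.inl

theorem Submodule.exists_ne_zero_forall_smul_mem {R M ι : Type*} [CommSemiring R]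
    [NoZeroDivisors R] [Nontrivial R] [AddCommMonoid M] [Module R M] [Fintype ι]
    (P : Submodule R M) {u : ι → M} (h : ∀ j, ∃ N : R, N ≠ 0 ∧ N • u j ∈ P) :
    ∃ c : R, c ≠ 0 ∧ ∀ j, c • u j ∈ P := by
  classical
  choose N hN hNu using h
  refine ⟨∏ j, N j, Finset.prod_ne_zero_iff.mpr fun j _ => hN j, fun j => ?_⟩
  rw [← Finset.mul_prod_erase Finset.univ N (Finset.mem_univ j), mul_comm, mul_smul]
  exact P.smul_mem _ (hNu j)

theorem sum_fromCols_smul_sub_eq_zero {E ι κ m : Type*} [AddCommGroup E] [Fintype ι]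
    [Fintype κ] (φ : Matrix m ι ℤ) (A : Matrix ι κ ℤ) (c : ℤ)
    {x f u : ι → E} {γ : κ → E} (hφ : ∀ i, ∑ j, φ i j • (x j - f j) = 0)
    (hA : ∀ j, c • u j = ∑ l, A j l • γ l) (i : m) :
    ∑ k, fromCols (c • φ) (-(φ * A)) i k • (Sum.elim x γ k - Sum.elim (f - u) 0 k) = 0 := by
  have hφu : ∑ j, (c • φ) i j • u j = ∑ l, (φ * A) i l • γ l := by
    simp only [Matrix.smul_apply, smul_eq_mul, mul_comm c, mul_smul, hA, Finset.smul_sum,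
      mul_apply, Finset.sum_smul]
    exact Finset.sum_comm
  have hφxf : ∑ j, (c • φ) i j • (x j - f j) = 0 := by
    simp only [Matrix.smul_apply, smul_eq_mul, mul_smul, ← Finset.smul_sum, hφ i, smul_zero]
  simp only [Fintype.sum_sum_type, fromCols_apply_inl, fromCols_apply_inr, Sum.elim_inl,
    Sum.elim_inr, Pi.sub_apply, Pi.zero_apply, sub_zero, ← sub_add, smul_add,
    Finset.sum_add_distrib, hφxf, zero_add, hφu, Matrix.neg_apply, neg_smul,
    Finset.sum_neg_distrib, add_neg_cancel]

theorem stmt_17_general {E : Type*} [AddCommGroup E] {g s : ℕ}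
    (ν : E → ℝ)
    (hνsmul : ∀ (n : ℤ) (e : E), ν (n • e) = |(n : ℝ)| * ν e)
    (V : Set (Fin g → E)) (ε : ℝ) (hε : 0 ≤ ε) (r : ℕ)
    (Γ : AddSubgroup (Fin g → E))
    (γ : Fin s → E)
    (hγmax : ∀ y ∈ divGroup Γ, ∃ N : ℤ, N ≠ 0 ∧ ∃ b : Fin s → ℤ, N • y = ∑ i, b i • γ i) :
    Function.Injective (fun x : Fin g → E => Sum.elim x γ) ∧
      ∀ x : Fin g → E,
        SrMem r V {w : Fin g → E | ∃ u ∈ Γ, ∀ kk, ν (w kk - u kk) ≤ ε} x →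
        SrMem r
          {z : Fin g ⊕ Fin s → E | (fun i => z (Sum.inl i)) ∈ V ∧ ∀ j, z (Sum.inr j) = γ j}
          {w : Fin g ⊕ Fin s → E | ∀ kk, ν (w kk) ≤ ε}
          (Sum.elim x γ) := by
  refine ⟨fun x x' h => funext fun i => congrFun h (Sum.inl i), ?_⟩
  rintro x ⟨hxV, n, φ, hrank, f, ⟨u, huΓ, huε⟩, hφ⟩
  have hu : ∀ j, ∃ N : ℤ, N ≠ 0 ∧ N • u j ∈ Submodule.span ℤ (Set.range γ) := fun j => by
    obtain ⟨N, hN, b, hb⟩ := hγmax (u j) ⟨1, one_ne_zero, u, huΓ, j, one_smul ℤ _⟩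
    exact ⟨N, hN, (Submodule.mem_span_range_iff_exists_fun ℤ).mpr ⟨b, hb.symm⟩⟩
  obtain ⟨c, hc, hcu⟩ := (Submodule.span ℤ (Set.range γ)).exists_ne_zero_forall_smul_mem hu
  choose A hA using fun j => (Submodule.mem_span_range_iff_exists_fun ℤ).mp (hcu j)
  have hrank' : φ.rank ≤ (fromCols (c • φ) (-(φ * of A))).rank := by
    rw [← rank_smul_of_mem_nonZeroDivisors φ (mem_nonZeroDivisors_of_ne_zero hc)]
    exact rank_le_rank_fromCols _ _
  refine ⟨⟨hxV, fun _ => rfl⟩, n, _, hrank.trans hrank', Sum.elim (f - u) 0, ?_,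
    sum_fromCols_smul_sub_eq_zero φ (of A) c hφ (fun j => (hA j).symm)⟩
  rintro (j | l)
  · exact huε j
  · have hν0 : ν 0 = 0 := by simpa using hνsmul 0 0
    simpa [hν0] using hε

/-- let `E` be the (divisible) group of algebraic points of an elliptic
curve without CM with Néron–Tate max semi-norm `ν`, `V ⊆ E^g` a subvariety, `ε ≥ 0`,
`r ≥ 1`, `Γ ⊆ E^g` a subgroup of finite rank, and `γ = (γ₁,…,γ_s)` a maximal free set
of the division group `Γ₀` of `Γ`.  Then `x ↦ (x, γ)` defines an injection of
`S_r(V, Γ_ε)` into `S_r(V × γ, O_ε)`, where `Γ_ε = Γ + O_ε` and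
`O_ε = {ξ : ‖ξ‖ ≤ ε}`. -/
theorem stmt_17 {E : Type*} [AddCommGroup E] {g s : ℕ}
    (hdiv : ∀ (n : ℤ), n ≠ 0 → ∀ e : E, ∃ e' : E, n • e' = e)
    (ν : E → ℝ) (hν0 : ∀ e : E, 0 ≤ ν e)
    (hνadd : ∀ e f : E, ν (e + f) ≤ ν e + ν f)
    (hνsmul : ∀ (n : ℤ) (e : E), ν (n • e) = |(n : ℝ)| * ν e)
    (V : Set (Fin g → E)) (ε : ℝ) (hε : 0 ≤ ε) (r : ℕ) (hr : 0 < r)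
    (Γ : AddSubgroup (Fin g → E))
    (γ : Fin s → E)
    (hγmem : ∀ i, γ i ∈ divGroup Γ)
    (hγind : ∀ b : Fin s → ℤ, ∑ i, b i • γ i = 0 → b = 0)
    (hγmax : ∀ y ∈ divGroup Γ, ∃ N : ℤ, N ≠ 0 ∧ ∃ b : Fin s → ℤ, N • y = ∑ i, b i • γ i) :
    Function.Injective (fun x : Fin g → E => Sum.elim x γ) ∧
      ∀ x : Fin g → E,
        SrMem r V {w : Fin g → E | ∃ u ∈ Γ, ∀ kk, ν (w kk - u kk) ≤ ε} x →
        SrMem r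
          {z : Fin g ⊕ Fin s → E | (fun i => z (Sum.inl i)) ∈ V ∧ ∀ j, z (Sum.inr j) = γ j}
          {w : Fin g ⊕ Fin s → E | ∀ kk, ν (w kk) ≤ ε}
          (Sum.elim x γ) :=
  stmt_17_general ν hνsmul V ε hε r Γ γ hγmax
end
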